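/- In the heterogeneous random graph G_n(α,β,W), the second moment E[((1/n)∑_{i=1}^n (E[t_i](2μ_i−1)/(μ_i²(μ_i−1)²))·(d_i−μ_i))²] equals (1/n²)∑_{i≠j} ((E[t_i](2μ_i−1))²/(μ_i⁴(μ_i−1)⁴))·μ_{ij}(1−μ_{ij}) + (1/n²)∑_{i≠j} (E[t_i](2μ_i−1)/(μ_i²(μ_i−1)²))·(E[t_j](2μ_j−1)/(μ_j²(μ_j−1)²))·μ_{ij}(1−μ_{ij}), and this quantity is Θ(p_n/n²), i.e. it is bounded above and below by positive constant multiples of p_n/n² uniformly over n and admissible weight arrays. -/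

import Mathlib

open MeasureTheory ProbabilityTheory Filter Finset Topology

noncomputable section

namespace HetRG

/-- The edge-probability scale `p_n = n^{-α}`. -/
def pn (α : ℝ) (n : ℕ) : ℝ := (n : ℝ) ^ (-α)

/-- `δ_n = (log (n p_n))^{-2}`. -/
def deltan (α : ℝ) (n : ℕ) : ℝ := (Real.log ((n : ℝ) * pn α n) ^ 2)⁻¹

/-- The heterogeneous Erdős–Rényi random graph `G_n(α, β, W)`: `A` is a symmetric
random 0-1 adjacency matrix with zero diagonal, the entries `A i j` for `i < j` are
independent Bernoulli with success probability `μ_{ij} = p_n * w i j`, where the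
symmetric weight array `w` has zero diagonal and off-diagonal entries in `[β, 1]`. -/
structure IsHetRG (α β : ℝ) {Ω : Type} [MeasureSpace Ω] (n : ℕ)
    (w : Fin n → Fin n → ℝ) (A : Fin n → Fin n → Ω → ℝ) : Prop where
  isProb : IsProbabilityMeasure (volume : Measure Ω)
  meas : ∀ i j, Measurable (A i j)
  wSymm : ∀ i j, w i j = w j i
  wDiag : ∀ i, w i i = 0
  wMem : ∀ i j, i ≠ j → w i j ∈ Set.Icc β 1
  aSymm : ∀ i j, A i j = A j i
  aDiag : ∀ i ω, A i i ω = 0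
  aVal : ∀ i j ω, A i j ω = 0 ∨ A i j ω = 1
  aBern : ∀ i j, i ≠ j → volume {ω | A i j ω = 1} = ENNReal.ofReal (pn α n * w i j)
  aIndep : iIndepFun
      (fun p : {p : Fin n × Fin n // p.1 < p.2} => A p.1.1 p.1.2) volume

variable {Ω : Type} [MeasureSpace Ω]

/-- `μ_{ij} = p_n w_{ij}`. -/
def muij (α : ℝ) {n : ℕ} (w : Fin n → Fin n → ℝ) (i j : Fin n) : ℝ := pn α n * w i j

/-- `μ_i = ∑_j μ_{ij}`. -/
def mui (α : ℝ) {n : ℕ} (w : Fin n → Fin n → ℝ) (i : Fin n) : ℝ := ∑ j, muij α w i j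

/-- The degree `d_i = ∑_j A_{ij}`. -/
def deg {n : ℕ} (A : Fin n → Fin n → Ω → ℝ) (i : Fin n) (ω : Ω) : ℝ := ∑ j, A i j ω

/-- The centered entry `Ā_{ij} = A_{ij} - μ_{ij}`. -/
def abar (α : ℝ) {n : ℕ} (w : Fin n → Fin n → ℝ) (A : Fin n → Fin n → Ω → ℝ)
    (i j : Fin n) (ω : Ω) : ℝ := A i j ω - muij α w i j

/-- `t_i = ∑_{j ≠ k} A_{ij} A_{jk} A_{ki}`. -/
def tri {n : ℕ} (A : Fin n → Fin n → Ω → ℝ) (i : Fin n) (ω : Ω) : ℝ :=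
  ∑ j, ∑ k, if j ≠ k then A i j ω * A j k ω * A k i ω else 0

/-- `∑_{j ≠ k} A_{ij} A_{ik}`, the denominator in the clustering coefficient. -/
def wedge {n : ℕ} (A : Fin n → Fin n → Ω → ℝ) (i : Fin n) (ω : Ω) : ℝ :=
  ∑ j, ∑ k, if j ≠ k then A i j ω * A i k ω else 0

/-- The average clustering coefficient `C̄_n` (summands with zero denominator are zero,
by the junk-value convention `x / 0 = 0`). -/
def clust {n : ℕ} (A : Fin n → Fin n → Ω → ℝ) (ω : Ω) : ℝ :=
  (n : ℝ)⁻¹ * ∑ i, tri A i ω / wedge A i ω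

/-- `a_i = E[1/(d_i (d_i - 1))]`, with the convention that the integrand is `0`
when `d_i ∈ {0, 1}` (junk value `0⁻¹ = 0`). -/
def ai {n : ℕ} (A : Fin n → Fin n → Ω → ℝ) (i : Fin n) : ℝ :=
  ∫ ω, (deg A i ω * (deg A i ω - 1))⁻¹

/-- `E[t_i]`. -/
def Etri {n : ℕ} (A : Fin n → Fin n → Ω → ℝ) (i : Fin n) : ℝ := ∫ ω, tri A i ω

/-- `b_i = E[t_i] (2μ_i - 1) / (μ_i² (μ_i - 1)²)`. -/
def bi (α : ℝ) {n : ℕ} (w : Fin n → Fin n → ℝ) (A : Fin n → Fin n → Ω → ℝ) (i : Fin n) : ℝ :=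
  Etri A i * (2 * mui α w i - 1) / (mui α w i ^ 2 * (mui α w i - 1) ^ 2)

/-- `c_{ij} = ∑_{k ≠ i,j} a_k μ_{ki} μ_{kj}`. -/
def cij (α : ℝ) {n : ℕ} (w : Fin n → Fin n → ℝ) (A : Fin n → Fin n → Ω → ℝ)
    (i j : Fin n) : ℝ :=
  ∑ k, if k ≠ i ∧ k ≠ j then ai A k * muij α w k i * muij α w k j else 0

/-- `d_{ij} = ∑_{k ≠ i,j} μ_{ki} μ_{kj}`. -/
def dij (α : ℝ) {n : ℕ} (w : Fin n → Fin n → ℝ) (i j : Fin n) : ℝ :=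
  ∑ k, if k ≠ i ∧ k ≠ j then muij α w k i * muij α w k j else 0

/-- `e_{ij} = 2 c_{ij} + 2 (a_i d_{ij} + a_j d_{ji}) - b_i - b_j`. -/
def eij (α : ℝ) {n : ℕ} (w : Fin n → Fin n → ℝ) (A : Fin n → Fin n → Ω → ℝ)
    (i j : Fin n) : ℝ :=
  2 * cij α w A i j + 2 * (ai A i * dij α w i j + ai A j * dij α w j i)
    - bi α w A i - bi α w A j

/-- `a_{ijk} = a_i + a_j + a_k`. -/
def aijk {n : ℕ} (A : Fin n → Fin n → Ω → ℝ) (i j k : Fin n) : ℝ := ai A i + ai A j + ai A k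

/-- `σ_{1n}² = (4/n²) ∑_{i<j<k} a_{ijk}² μ_{ij}(1-μ_{ij}) μ_{jk}(1-μ_{jk}) μ_{ki}(1-μ_{ki})`. -/
def sigma1sq (α : ℝ) {n : ℕ} (w : Fin n → Fin n → ℝ) (A : Fin n → Fin n → Ω → ℝ) : ℝ :=
  4 / (n : ℝ) ^ 2 * ∑ i, ∑ j, ∑ k, if i < j ∧ j < k then
    aijk A i j k ^ 2 * (muij α w i j * (1 - muij α w i j)) *
      (muij α w j k * (1 - muij α w j k)) * (muij α w k i * (1 - muij α w k i)) else 0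

/-- `σ_{2n}² = (4/n²) ∑_{i<j} e_{ij}² μ_{ij}(1-μ_{ij})`. -/
def sigma2sq (α : ℝ) {n : ℕ} (w : Fin n → Fin n → ℝ) (A : Fin n → Fin n → Ω → ℝ) : ℝ :=
  4 / (n : ℝ) ^ 2 * ∑ i, ∑ j, if i < j then
    eij α w A i j ^ 2 * (muij α w i j * (1 - muij α w i j)) else 0

/-- The sum of weighted triangles `T_n = ∑_{i<j<k} A_{ij}A_{jk}A_{ki}/(d_i d_j d_k)`
(summands with zero denominator are zero by the junk-value convention). -/
def Tn {n : ℕ} (A : Fin n → Fin n → Ω → ℝ) (ω : Ω) : ℝ :=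
  ∑ i, ∑ j, ∑ k, if i < j ∧ j < k then
    A i j ω * A j k ω * A k i ω / (deg A i ω * deg A j ω * deg A k ω) else 0

/-- `η_i = ∑_{j ≠ k} μ_{ij} μ_{jk} μ_{ki} / (μ_i² μ_j μ_k)`. -/
def etai (α : ℝ) {n : ℕ} (w : Fin n → Fin n → ℝ) (i : Fin n) : ℝ :=
  ∑ j, ∑ k, if j ≠ k then
    muij α w i j * muij α w j k * muij α w k i /
      (mui α w i ^ 2 * mui α w j * mui α w k) else 0

/-- `γ_{ij} = ∑_{k ∉ {i,j}} μ_{jk} μ_{ki} / (μ_i μ_j μ_k)`. -/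
def gammaij (α : ℝ) {n : ℕ} (w : Fin n → Fin n → ℝ) (i j : Fin n) : ℝ :=
  ∑ k, if k ≠ i ∧ k ≠ j then
    muij α w j k * muij α w k i / (mui α w i * mui α w j * mui α w k) else 0

/-- `v_{1n}² = ∑_{i<j<k} μ_{ij}(1-μ_{ij}) μ_{jk}(1-μ_{jk}) μ_{ki}(1-μ_{ki}) / (μ_i² μ_j² μ_k²)`. -/
def v1sq (α : ℝ) {n : ℕ} (w : Fin n → Fin n → ℝ) : ℝ :=
  ∑ i, ∑ j, ∑ k, if i < j ∧ j < k then
    muij α w i j * (1 - muij α w i j) * (muij α w j k * (1 - muij α w j k)) *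
      (muij α w k i * (1 - muij α w k i)) /
      (mui α w i ^ 2 * mui α w j ^ 2 * mui α w k ^ 2) else 0

/-- `v_{2n}² = ∑_{i<j} (γ_{ij} - (η_i + η_j)/2)² μ_{ij}(1-μ_{ij})`. -/
def v2sq (α : ℝ) {n : ℕ} (w : Fin n → Fin n → ℝ) : ℝ :=
  ∑ i, ∑ j, if i < j then
    (gammaij α w i j - (etai α w i + etai α w j) / 2) ^ 2 *
      (muij α w i j * (1 - muij α w i j)) else 0

/-- Convergence in distribution to the standard normal law `N(0,1)`, phrased as
pointwise convergence of the CDFs (every point is a continuity point of the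
standard Gaussian CDF). -/
def CDFTendstoGaussian (X : ℕ → Ω → ℝ) : Prop :=
  ∀ x : ℝ, Tendsto (fun n => (volume {ω | X n ω ≤ x}).toReal) atTop
    (𝓝 ((gaussianReal 0 1 (Set.Iic x)).toReal))

/-- `X_n = o_P(r_n)`: `X_n / r_n → 0` in probability. -/
def IsoP (X : ℕ → Ω → ℝ) (r : ℕ → ℝ) : Prop :=
  ∀ ε : ℝ, 0 < ε →
    Tendsto (fun n => (volume {ω | ε * |r n| < |X n ω|}).toReal) atTop (𝓝 0)

/-- The Erdős–Rényi weight array: all off-diagonal weights equal to `c`. -/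
def wER (c : ℝ) (n : ℕ) : Fin n → Fin n → ℝ := fun i j => if i = j then 0 else c

/-- The rank-1 weight array `w_{ij} = w_i w_j` (zero on the diagonal). -/
def wRank1 {n : ℕ} (v : Fin n → ℝ) : Fin n → Fin n → ℝ :=
  fun i j => if i = j then 0 else v i * v j

section Aux

variable {α β : ℝ} {n : ℕ} {w : Fin n → Fin n → ℝ} {A : Fin n → Fin n → Ω → ℝ}

lemma pn_nonneg (α : ℝ) (n : ℕ) : 0 ≤ pn α n := Real.rpow_nonneg (Nat.cast_nonneg n) _

lemma pn_le_one (hα : 0 ≤ α) (hn : 1 ≤ n) : pn α n ≤ 1 :=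
  Real.rpow_le_one_of_one_le_of_nonpos (by exact_mod_cast hn) (by linarith)

lemma integrable_bdd [IsProbabilityMeasure (volume : Measure Ω)] {f : Ω → ℝ}
    (hm : Measurable f) {C : ℝ} (hb : ∀ ω, |f ω| ≤ C) : Integrable f :=
  (integrable_const C).mono' hm.aestronglyMeasurable (ae_of_all _ (by simpa using hb))

namespace IsHetRG

variable (h : IsHetRG α β n w A)
include h

lemma muij_nonneg (hβ : 0 ≤ β) (i j : Fin n) : 0 ≤ muij α w i j := by
  rcases eq_or_ne i j with rfl | hij
  · simp [muij, h.wDiag]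
  · exact mul_nonneg (pn_nonneg α n) (le_trans hβ (h.wMem i j hij).1)

lemma muij_le_pn (hα : 0 ≤ α) (i j : Fin n) : muij α w i j ≤ pn α n := by
  rcases eq_or_ne i j with rfl | hij
  · simpa [muij, h.wDiag] using pn_nonneg α n
  · calc muij α w i j ≤ pn α n * 1 :=
        mul_le_mul_of_nonneg_left (h.wMem i j hij).2 (pn_nonneg α n)
    _ = pn α n := mul_one _

lemma muij_le_one (hα : 0 ≤ α) (i j : Fin n) : muij α w i j ≤ 1 :=
  (h.muij_le_pn hα i j).trans (pn_le_one hα i.pos)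

lemma muij_symm (i j : Fin n) : muij α w i j = muij α w j i := by
  simp [muij, h.wSymm i j]

lemma muij_diag (i : Fin n) : muij α w i i = 0 := by simp [muij, h.wDiag]

lemma abs_A_le_one (i j : Fin n) (ω : Ω) : |A i j ω| ≤ 1 := by
  rcases h.aVal i j ω with h0 | h0 <;> simp [h0]

lemma abs_abar_le_one (hα : 0 ≤ α) (hβ : 0 ≤ β) (i j : Fin n) (ω : Ω) :
    |abar α w A i j ω| ≤ 1 := by
  have h1 := h.muij_nonneg hβ i j
  have h2 := h.muij_le_one hα i j
  rcases h.aVal i j ω with h0 | h0 <;> rw [abar, h0, abs_le] <;> constructor <;> linarith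

lemma meas_abar (i j : Fin n) : Measurable (abar α w A i j) :=
  (h.meas i j).sub measurable_const

lemma integrable_A (i j : Fin n) : Integrable (A i j) := by
  haveI := h.isProb
  exact integrable_bdd (h.meas i j) (h.abs_A_le_one i j)

lemma integral_A (hβ : 0 ≤ β) {i j : Fin n} (hij : i ≠ j) :
    ∫ ω, A i j ω = muij α w i j := by
  haveI := h.isProb
  have hs : MeasurableSet {ω | A i j ω = 1} := h.meas i j (measurableSet_singleton 1)
  have hind : A i j = Set.indicator {ω | A i j ω = 1} (fun _ => (1 : ℝ)) := by
    funext ω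
    rcases h.aVal i j ω with h0 | h0
    · simp [Set.indicator, h0]
    · simp [Set.indicator, h0]
  rw [hind, integral_indicator_const (1 : ℝ) hs, measureReal_def, h.aBern i j hij, smul_eq_mul, mul_one,
    show pn α n * w i j = muij α w i j from rfl,
    ENNReal.toReal_ofReal (h.muij_nonneg hβ i j)]

lemma abar_diag (i : Fin n) : abar α w A i i = fun _ => 0 := by
  funext ω; simp [abar, h.aDiag, h.muij_diag]

lemma integral_abar_sq (hβ : 0 ≤ β) {i j : Fin n} (hij : i ≠ j) :
    ∫ ω, abar α w A i j ω ^ 2 = muij α w i j * (1 - muij α w i j) := by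
  haveI := h.isProb
  set ν := muij α w i j with hν
  have hpt : (fun ω => abar α w A i j ω ^ 2)
      = fun ω => (1 - 2 * ν) * A i j ω + ν ^ 2 := by
    funext ω
    rcases h.aVal i j ω with h0 | h0 <;> simp [abar, h0] <;> ring
  rw [hpt, integral_add ((h.integrable_A i j).const_mul _) (integrable_const _),
    integral_const_mul, h.integral_A hβ hij, integral_const]
  simp [← hν]
  ring
end IsHetRG

/-- Canonical index of the edge `{i,j}` in the index type of the independent family. -/
def eidx {n : ℕ} (i j : Fin n) (hij : i ≠ j) : {p : Fin n × Fin n // p.1 < p.2} :=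
  if h : i < j then ⟨(i, j), h⟩ else ⟨(j, i), (hij.lt_or_gt.resolve_left h)⟩

lemma eidx_ne {n : ℕ} {i j i' j' : Fin n} (hij : i ≠ j) (hij' : i' ≠ j')
    (h1 : (i', j') ≠ (i, j)) (h2 : (i', j') ≠ (j, i)) :
    eidx i j hij ≠ eidx i' j' hij' := by
  unfold eidx
  split_ifs with ha hb hb <;>
  · intro hco
    rw [Subtype.mk_eq_mk, Prod.mk.injEq] at hco
    obtain ⟨e1, e2⟩ := hco
    subst e1; subst e2; simp_all

namespace IsHetRG

variable (h : IsHetRG α β n w A)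
include h

lemma A_eidx {i j : Fin n} (hij : i ≠ j) :
    A (eidx i j hij).1.1 (eidx i j hij).1.2 = A i j := by
  unfold eidx; split_ifs with ha
  · rfl
  · exact (h.aSymm j i).symm ▸ rfl

lemma indep_of_ne {i j i' j' : Fin n} (hij : i ≠ j) (hij' : i' ≠ j')
    (h1 : (i', j') ≠ (i, j)) (h2 : (i', j') ≠ (j, i)) :
    IndepFun (A i j) (A i' j') (volume : Measure Ω) := by
  have := h.aIndep.indepFun (eidx_ne hij hij' h1 h2)
  rwa [h.A_eidx hij, h.A_eidx hij'] at this

lemma integral_abar_mul_of_ne (hβ : 0 ≤ β) {i j i' j' : Fin n} (hij : i ≠ j) (hij' : i' ≠ j')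
    (h1 : (i', j') ≠ (i, j)) (h2 : (i', j') ≠ (j, i)) :
    ∫ ω, abar α w A i j ω * abar α w A i' j' ω = 0 := by
  haveI := h.isProb
  set ν := muij α w i j with hν
  set ν' := muij α w i' j' with hν'
  have hpt : (fun ω => abar α w A i j ω * abar α w A i' j' ω)
      = fun ω => (A i j ω * A i' j' ω - ν' * A i j ω) - (ν * A i' j' ω - ν * ν') := by
    funext ω; simp only [abar, ← hν, ← hν']; ring
  have hXY : ∫ ω, A i j ω * A i' j' ω = ν * ν' := by
    rw [(h.indep_of_ne hij hij' h1 h2).integral_fun_mul_eq_mul_integral (h.meas i j).aestronglyMeasurable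
      (h.meas i' j').aestronglyMeasurable, h.integral_A hβ hij, h.integral_A hβ hij']
  have hXYi : Integrable (fun ω => A i j ω * A i' j' ω) :=
    integrable_bdd ((h.meas i j).mul (h.meas i' j')) (C := 1) (fun ω => by
      rw [abs_mul]
      exact mul_le_one₀ (h.abs_A_le_one i j ω) (abs_nonneg _) (h.abs_A_le_one i' j' ω))
  have I1 : Integrable (fun ω => ν' * A i j ω) := (h.integrable_A i j).const_mul _
  have I2 : Integrable (fun ω => ν * A i' j' ω) := (h.integrable_A i' j').const_mul _
  have I3 : Integrable (fun _ : Ω => ν * ν') := integrable_const _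
  have I12 : Integrable (fun ω => A i j ω * A i' j' ω - ν' * A i j ω) := hXYi.sub I1
  have I23 : Integrable (fun ω => ν * A i' j' ω - ν * ν') := I2.sub I3
  rw [hpt, integral_sub I12 I23, integral_sub hXYi I1,
    integral_sub I2 I3,
    integral_const_mul, integral_const_mul, hXY, h.integral_A hβ hij, h.integral_A hβ hij',
    integral_const]
  simp
  ring

/-- The covariance of two centered entries. -/
lemma cov_abar (hα : 0 ≤ α) (hβ : 0 ≤ β) (i j i' j' : Fin n) :
    ∫ ω, abar α w A i j ω * abar α w A i' j' ω
      = if i ≠ j ∧ ((i', j') = (i, j) ∨ (i', j') = (j, i)) then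
          muij α w i j * (1 - muij α w i j) else 0 := by
  haveI := h.isProb
  by_cases hij : i = j
  · subst hij
    simp [h.abar_diag i]
  by_cases hc1 : (i', j') = (i, j)
  · have e1 : i' = i := congrArg Prod.fst hc1
    have e2 : j' = j := congrArg Prod.snd hc1
    rw [if_pos ⟨hij, Or.inl hc1⟩]
    have habs : abar α w A i' j' = abar α w A i j := by rw [e1, e2]
    rw [habs]
    simpa [sq] using h.integral_abar_sq hβ hij
  by_cases hc2 : (i', j') = (j, i)
  · have e1 : i' = j := congrArg Prod.fst hc2
    have e2 : j' = i := congrArg Prod.snd hc2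
    rw [if_pos ⟨hij, Or.inr hc2⟩]
    have habs : abar α w A i' j' = abar α w A i j := by
      funext ω
      simp only [abar, e1, e2, ← h.aSymm i j, h.muij_symm j i]
    rw [habs]
    simpa [sq] using h.integral_abar_sq hβ hij
  by_cases hij' : i' = j'
  · subst hij'
    simp [h.abar_diag i', hc1, hc2]
  · rw [if_neg (by tauto), h.integral_abar_mul_of_ne hβ hij hij' hc1 hc2]

lemma integrable_abar_mul (hα : 0 ≤ α) (hβ : 0 ≤ β) (i j i' j' : Fin n) :
    Integrable (fun ω => abar α w A i j ω * abar α w A i' j' ω) := by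
  haveI := h.isProb
  refine integrable_bdd ((h.meas_abar i j).mul (h.meas_abar i' j')) (C := 1) (fun ω => ?_)
  rw [abs_mul]
  exact mul_le_one₀ (h.abs_abar_le_one hα hβ i j ω) (abs_nonneg _)
    (h.abs_abar_le_one hα hβ i' j' ω)

/-- The key second-moment identity in raw form. -/
lemma second_moment_eq (hα : 0 ≤ α) (hβ : 0 ≤ β) :
    ∫ ω, ((n : ℝ)⁻¹ * ∑ i, bi α w A i * (deg A i ω - mui α w i)) ^ 2
      = ((n : ℝ) ^ 2)⁻¹ * ∑ i, ∑ j, (if i ≠ j then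
          (bi α w A i ^ 2 + bi α w A i * bi α w A j) *
            (muij α w i j * (1 - muij α w i j)) else 0) := by
  haveI := h.isProb
  set P : Finset (Fin n × Fin n) := Finset.univ ×ˢ Finset.univ with hP
  set g : Fin n × Fin n → Ω → ℝ := fun p ω => bi α w A p.1 * abar α w A p.1 p.2 ω with hg
  have hsum : ∀ ω, ∑ i, bi α w A i * (deg A i ω - mui α w i) = ∑ p ∈ P, g p ω := by
    intro ω
    rw [hP, Finset.sum_product]
    refine Finset.sum_congr rfl fun i _ => ?_
    have : deg A i ω - mui α w i = ∑ j, abar α w A i j ω := by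
      rw [deg, mui, ← Finset.sum_sub_distrib]; rfl
    rw [this, Finset.mul_sum]
  have hint : ∀ p q : Fin n × Fin n, Integrable (fun ω => g p ω * g q ω) := by
    intro p q
    have hpt : (fun ω => g p ω * g q ω) = fun ω =>
        (bi α w A p.1 * bi α w A q.1) * (abar α w A p.1 p.2 ω * abar α w A q.1 q.2 ω) := by
      funext ω; rw [hg]; ring
    rw [hpt]
    exact (h.integrable_abar_mul hα hβ p.1 p.2 q.1 q.2).const_mul _
  have step1 : ∫ ω, ((n : ℝ)⁻¹ * ∑ i, bi α w A i * (deg A i ω - mui α w i)) ^ 2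
      = ((n : ℝ) ^ 2)⁻¹ * ∫ ω, (∑ p ∈ P, g p ω) ^ 2 := by
    rw [← integral_const_mul]
    congr 1; funext ω
    rw [hsum ω, mul_pow, ← inv_pow]
  rw [step1]
  congr 1
  have expand : ∀ ω, (∑ p ∈ P, g p ω) ^ 2 = ∑ p ∈ P, ∑ q ∈ P, g p ω * g q ω := by
    intro ω; rw [sq, Finset.sum_mul_sum]
  have step2 : ∫ ω, (∑ p ∈ P, g p ω) ^ 2 = ∑ p ∈ P, ∑ q ∈ P, ∫ ω, g p ω * g q ω := by
    calc ∫ ω, (∑ p ∈ P, g p ω) ^ 2 = ∫ ω, ∑ p ∈ P, ∑ q ∈ P, g p ω * g q ω := by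
          congr 1; funext ω; exact expand ω
      _ = ∑ p ∈ P, ∫ ω, ∑ q ∈ P, g p ω * g q ω :=
          integral_finset_sum P fun p _ => integrable_finset_sum P fun q _ => hint p q
      _ = ∑ p ∈ P, ∑ q ∈ P, ∫ ω, g p ω * g q ω :=
          Finset.sum_congr rfl fun p _ => integral_finset_sum P fun q _ => hint p q
  rw [step2]
  have cov' : ∀ p q : Fin n × Fin n, ∫ ω, g p ω * g q ω
      = bi α w A p.1 * bi α w A q.1 *
        (if p.1 ≠ p.2 ∧ ((q.1, q.2) = (p.1, p.2) ∨ (q.1, q.2) = (p.2, p.1)) then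
          muij α w p.1 p.2 * (1 - muij α w p.1 p.2) else 0) := by
    intro p q
    have hpt : (fun ω => g p ω * g q ω) = fun ω =>
        (bi α w A p.1 * bi α w A q.1) * (abar α w A p.1 p.2 ω * abar α w A q.1 q.2 ω) := by
      funext ω; rw [hg]; ring
    rw [hpt, integral_const_mul, h.cov_abar hα hβ p.1 p.2 q.1 q.2]
  calc ∑ p ∈ P, ∑ q ∈ P, ∫ ω, g p ω * g q ω
      = ∑ p ∈ P, ∑ q ∈ P, bi α w A p.1 * bi α w A q.1 *
          (if p.1 ≠ p.2 ∧ ((q.1, q.2) = (p.1, p.2) ∨ (q.1, q.2) = (p.2, p.1)) then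
            muij α w p.1 p.2 * (1 - muij α w p.1 p.2) else 0) :=
        Finset.sum_congr rfl fun p _ => Finset.sum_congr rfl fun q _ => cov' p q
    _ = ∑ i, ∑ j, (if i ≠ j then
          (bi α w A i ^ 2 + bi α w A i * bi α w A j) *
            (muij α w i j * (1 - muij α w i j)) else 0) := by
        rw [hP, Finset.sum_product]
        refine Finset.sum_congr rfl fun i _ => ?_
        refine Finset.sum_congr rfl fun j _ => ?_
        by_cases hij : i = j
        · subst hij; simp
        · set V := muij α w i j * (1 - muij α w i j) with hV
          have inner : ∀ q : Fin n × Fin n, bi α w A i * bi α w A q.1 *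
              (if (i : Fin n) ≠ j ∧ ((q.1, q.2) = (i, j) ∨ (q.1, q.2) = (j, i)) then V else 0)
              = (if q = (i, j) then bi α w A i * bi α w A i * V else 0)
                + (if q = (j, i) then bi α w A i * bi α w A j * V else 0) := by
            intro q
            by_cases hq1 : q = (i, j)
            · rw [hq1]
              simp [hij, Prod.ext_iff, (Ne.symm hij)]
            · by_cases hq2 : q = (j, i)
              · rw [hq2]
                simp [hij, Prod.ext_iff, (Ne.symm hij)]
              · have : ¬((q.1, q.2) = (i, j) ∨ (q.1, q.2) = (j, i)) := by
                  simpa using And.intro hq1 hq2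
                rw [if_neg hq1, if_neg hq2, if_neg (by tauto)]
                simp
          rw [Finset.sum_congr rfl fun q _ => inner q, Finset.sum_add_distrib,
            Finset.sum_ite_eq' P (i, j), Finset.sum_ite_eq' P (j, i)]
          have hmem : ∀ a b : Fin n, ((a, b) : Fin n × Fin n) ∈ P := by
            intro a b; simp [hP]
          rw [if_pos (hmem i j), if_pos (hmem j i), if_pos hij]
          ring

lemma integral_triple (hβ : 0 ≤ β) {i j k : Fin n} (hij : i ≠ j) (hjk : j ≠ k)
    (hki : k ≠ i) :
    ∫ ω, A i j ω * A j k ω * A k i ω = muij α w i j * muij α w j k * muij α w k i := by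
  haveI := h.isProb
  set f : {p : Fin n × Fin n // p.1 < p.2} → Ω → ℝ := fun p => A p.1.1 p.1.2 with hf
  have hmeas : ∀ p, Measurable (f p) := fun p => h.meas _ _
  set p1 := eidx i j hij with hp1
  set p2 := eidx j k hjk with hp2
  set p3 := eidx k i hki with hp3
  have e1 : f p1 = A i j := h.A_eidx hij
  have e2 : f p2 = A j k := h.A_eidx hjk
  have e3 : f p3 = A k i := h.A_eidx hki
  have h12 : p1 ≠ p2 := eidx_ne hij hjk
    (by intro hc; exact hij (congrArg Prod.fst hc).symm)
    (by intro hc; exact hki (congrArg Prod.snd hc))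
  have h13 : p1 ≠ p3 := eidx_ne hij hki
    (by intro hc; exact hki (congrArg Prod.fst hc))
    (by intro hc; exact hjk (congrArg Prod.fst hc).symm)
  have h23 : p2 ≠ p3 := eidx_ne hjk hki
    (by intro hc; exact hjk (congrArg Prod.fst hc).symm)
    (by intro hc; exact hij (congrArg Prod.snd hc))
  have I3 : IndepFun (f p1 * f p2) (f p3) (volume : Measure Ω) :=
    h.aIndep.indepFun_mul_left hmeas p1 p2 p3 h13 h23
  have I2 : IndepFun (f p1) (f p2) (volume : Measure Ω) := h.aIndep.indepFun h12
  have hprod : ∫ ω, f p1 ω * f p2 ω = (∫ ω, f p1 ω) * ∫ ω, f p2 ω :=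
    I2.integral_fun_mul_eq_mul_integral (hmeas p1).aestronglyMeasurable (hmeas p2).aestronglyMeasurable
  have key : ∫ ω, (f p1 * f p2) ω * f p3 ω = (∫ ω, (f p1 * f p2) ω) * ∫ ω, f p3 ω :=
    I3.integral_fun_mul_eq_mul_integral ((hmeas p1).mul (hmeas p2)).aestronglyMeasurable
      (hmeas p3).aestronglyMeasurable
  have hpt : (fun ω => A i j ω * A j k ω * A k i ω)
      = fun ω => (f p1 * f p2) ω * f p3 ω := by
    funext ω; simp [Pi.mul_apply, e1, e2, e3]
  have hprod' : ∫ ω, (f p1 * f p2) ω = (∫ ω, f p1 ω) * ∫ ω, f p2 ω := hprod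
  rw [hpt, key, hprod', e1, e2, e3, h.integral_A hβ hij, h.integral_A hβ hjk,
    h.integral_A hβ hki]
lemma Etri_eq (hβ : 0 ≤ β) (i : Fin n) :
    Etri A i = ∑ j, ∑ k, if j ≠ k ∧ i ≠ j ∧ i ≠ k then
      muij α w i j * muij α w j k * muij α w k i else 0 := by
  haveI := h.isProb
  have hint : ∀ j k : Fin n, Integrable
      (fun ω => if j ≠ k then A i j ω * A j k ω * A k i ω else 0) := by
    intro j k
    by_cases hjk : j ≠ k
    · simp only [if_pos hjk]
      refine integrable_bdd (((h.meas i j).mul (h.meas j k)).mul (h.meas k i))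
        (C := 1) (fun ω => ?_)
      rw [abs_mul, abs_mul]
      exact mul_le_one₀ (mul_le_one₀ (h.abs_A_le_one i j ω) (abs_nonneg _)
        (h.abs_A_le_one j k ω)) (abs_nonneg _) (h.abs_A_le_one k i ω)
    · simp only [if_neg hjk]
      exact integrable_const 0
  rw [Etri]
  calc ∫ ω, tri A i ω
      = ∑ j, ∑ k, ∫ ω, (if j ≠ k then A i j ω * A j k ω * A k i ω else 0) := by
        rw [show (fun ω => tri A i ω) = fun ω => ∑ j, ∑ k,
            (if j ≠ k then A i j ω * A j k ω * A k i ω else 0) from rfl]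
        rw [integral_finset_sum _ fun j _ => integrable_finset_sum _ fun k _ => hint j k]
        exact Finset.sum_congr rfl fun j _ => integral_finset_sum _ fun k _ => hint j k
    _ = ∑ j, ∑ k, (if j ≠ k ∧ i ≠ j ∧ i ≠ k then
          muij α w i j * muij α w j k * muij α w k i else 0) := by
        refine Finset.sum_congr rfl fun j _ => Finset.sum_congr rfl fun k _ => ?_
        by_cases hjk : j = k
        · simp [hjk]
        by_cases hij : i = j
        · subst hij
          rw [if_neg (by tauto)]
          simp [h.aDiag]
        by_cases hik : i = k
        · subst hik
          rw [if_neg (by tauto)]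
          simp [h.aDiag]
        · rw [if_pos (show (j ≠ k) ∧ i ≠ j ∧ i ≠ k from ⟨hjk, hij, hik⟩)]
          have hfn : (fun ω => if j ≠ k then A i j ω * A j k ω * A k i ω else 0)
              = fun ω => A i j ω * A j k ω * A k i ω := by
            funext ω; rw [if_pos hjk]
          rw [hfn, h.integral_triple hβ hij hjk (Ne.symm hik)]

lemma pn_pos (hn : 0 < n) : 0 < pn α n :=
  Real.rpow_pos_of_pos (by exact_mod_cast hn) _

lemma muij_ge (hβ0 : 0 ≤ β) {i j : Fin n} (hij : i ≠ j) :
    β * pn α n ≤ muij α w i j := by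
  calc β * pn α n ≤ w i j * pn α n :=
        mul_le_mul_of_nonneg_right (h.wMem i j hij).1 (pn_nonneg α n)
    _ = muij α w i j := by rw [muij]; ring

lemma mui_upper (hα0 : 0 ≤ α) (i : Fin n) : mui α w i ≤ (n : ℝ) * pn α n := by
  have := Finset.sum_le_card_nsmul Finset.univ (fun j => muij α w i j) (pn α n)
    (fun j _ => h.muij_le_pn hα0 i j)
  simpa [mui, Finset.card_univ, nsmul_eq_mul] using this

lemma mui_lower (hβ0 : 0 ≤ β) (i : Fin n) :
    ((n : ℝ) - 1) * (β * pn α n) ≤ mui α w i := by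
  have hsubset : (Finset.univ.erase i) ⊆ Finset.univ := Finset.subset_univ _
  have h1 : ∑ j ∈ Finset.univ.erase i, muij α w i j ≤ mui α w i := by
    rw [mui]
    exact Finset.sum_le_sum_of_subset_of_nonneg hsubset
      (fun j _ _ => h.muij_nonneg hβ0 i j)
  have h2 : (Finset.univ.erase i).card • (β * pn α n)
      ≤ ∑ j ∈ Finset.univ.erase i, muij α w i j :=
    Finset.card_nsmul_le_sum _ _ _ (fun j hj => h.muij_ge hβ0 (Ne.symm (Finset.mem_erase.mp hj).1))
  have hcard : (Finset.univ.erase i).card = n - 1 := by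
    rw [Finset.card_erase_of_mem (Finset.mem_univ i), Finset.card_univ, Fintype.card_fin]
  have hn1 : ((n - 1 : ℕ) : ℝ) = (n : ℝ) - 1 := by
    have : 1 ≤ n := i.pos
    push_cast [Nat.cast_sub this]
    ring
  calc ((n : ℝ) - 1) * (β * pn α n) = ((n - 1 : ℕ) : ℝ) * (β * pn α n) := by rw [hn1]
    _ = (Finset.univ.erase i).card • (β * pn α n) := by rw [hcard, nsmul_eq_mul]
    _ ≤ ∑ j ∈ Finset.univ.erase i, muij α w i j := h2
    _ ≤ mui α w i := h1

lemma Etri_upper (hα0 : 0 ≤ α) (hβ0 : 0 ≤ β) (i : Fin n) :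
    Etri A i ≤ (n : ℝ) ^ 2 * pn α n ^ 3 := by
  rw [h.Etri_eq hβ0 i]
  have hbound : ∀ j k : Fin n, (if j ≠ k ∧ i ≠ j ∧ i ≠ k then
      muij α w i j * muij α w j k * muij α w k i else 0) ≤ pn α n ^ 3 := by
    intro j k
    split_ifs with hc
    · have b1 := h.muij_le_pn hα0 i j
      have b2 := h.muij_le_pn hα0 j k
      have b3 := h.muij_le_pn hα0 k i
      have n1 := h.muij_nonneg hβ0 i j
      have n2 := h.muij_nonneg hβ0 j k
      have n3 := h.muij_nonneg hβ0 k i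
      have hp := pn_nonneg α n
      calc muij α w i j * muij α w j k * muij α w k i
          ≤ pn α n * pn α n * pn α n := by
            apply mul_le_mul (mul_le_mul b1 b2 n2 hp) b3 n3 (mul_nonneg hp hp)
        _ = pn α n ^ 3 := by ring
    · exact pow_nonneg (pn_nonneg α n) 3
  calc ∑ j, ∑ k, (if j ≠ k ∧ i ≠ j ∧ i ≠ k then
        muij α w i j * muij α w j k * muij α w k i else 0)
      ≤ ∑ j : Fin n, ∑ k : Fin n, pn α n ^ 3 :=
        Finset.sum_le_sum fun j _ => Finset.sum_le_sum fun k _ => hbound j k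
    _ = (n : ℝ) ^ 2 * pn α n ^ 3 := by
        simp [Finset.sum_const, Finset.card_univ, nsmul_eq_mul]
        ring

lemma Etri_nonneg_term (hβ0 : 0 ≤ β) (i j k : Fin n) :
    0 ≤ (if j ≠ k ∧ i ≠ j ∧ i ≠ k then
      muij α w i j * muij α w j k * muij α w k i else 0) := by
  split_ifs with hc
  · exact mul_nonneg (mul_nonneg (h.muij_nonneg hβ0 i j) (h.muij_nonneg hβ0 j k))
      (h.muij_nonneg hβ0 k i)
  · exact le_refl 0

lemma Etri_lower (hβ0 : 0 ≤ β) (i : Fin n) :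
    ((n - 1 : ℕ) : ℝ) * ((n - 2 : ℕ) : ℝ) * (β * pn α n) ^ 3 ≤ Etri A i := by
  rw [h.Etri_eq hβ0 i]
  set c := (β * pn α n) ^ 3 with hc
  have hc0 : 0 ≤ c := pow_nonneg (mul_nonneg hβ0 (pn_nonneg α n)) 3
  set s := Finset.univ.erase i with hs
  set F : Fin n → Fin n → ℝ := fun j k => (if j ≠ k ∧ i ≠ j ∧ i ≠ k then
    muij α w i j * muij α w j k * muij α w k i else 0) with hF
  have hF0 : ∀ j k, 0 ≤ F j k := fun j k => h.Etri_nonneg_term hβ0 i j k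
  have hcards : s.card = n - 1 := by
    rw [hs, Finset.card_erase_of_mem (Finset.mem_univ i), Finset.card_univ, Fintype.card_fin]
  have step2 : ∀ j ∈ s, ∀ k ∈ s.erase j, c ≤ F j k := by
    intro j hj k hk
    have hji : j ≠ i := (Finset.mem_erase.mp hj).1
    have hkj : k ≠ j := (Finset.mem_erase.mp hk).1
    have hki : k ≠ i := (Finset.mem_erase.mp (Finset.mem_erase.mp hk).2).1
    rw [hF]
    simp only [if_pos (show j ≠ k ∧ i ≠ j ∧ i ≠ k from ⟨Ne.symm hkj, Ne.symm hji, Ne.symm hki⟩)]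
    have hp0 : 0 ≤ β * pn α n := mul_nonneg hβ0 (pn_nonneg α n)
    have g1 := h.muij_ge hβ0 (Ne.symm hji)
    have g2 := h.muij_ge hβ0 (Ne.symm hkj)
    have g3 := h.muij_ge hβ0 hki
    calc c = β * pn α n * (β * pn α n) * (β * pn α n) := by rw [hc]; ring
      _ ≤ muij α w i j * muij α w j k * muij α w k i :=
          mul_le_mul (mul_le_mul g1 g2 hp0 ((hp0.trans g1))) g3 hp0
            (mul_nonneg (hp0.trans g1) (hp0.trans g2))
  have inner_eq : ∀ j ∈ s, (((n - 2 : ℕ) : ℝ) * c) = ∑ k ∈ s.erase j, c := by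
    intro j hj
    rw [Finset.sum_const, Finset.card_erase_of_mem hj, hcards, nsmul_eq_mul,
      show n - 1 - 1 = n - 2 from by omega]
  calc ((n - 1 : ℕ) : ℝ) * ((n - 2 : ℕ) : ℝ) * c
      = ∑ j ∈ s, ((n - 2 : ℕ) : ℝ) * c := by
        rw [Finset.sum_const, hcards, nsmul_eq_mul, mul_assoc]
    _ = ∑ j ∈ s, ∑ k ∈ s.erase j, c := Finset.sum_congr rfl inner_eq
    _ ≤ ∑ j ∈ s, ∑ k ∈ s.erase j, F j k :=
        Finset.sum_le_sum fun j hj => Finset.sum_le_sum fun k hk => step2 j hj k hk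
    _ ≤ ∑ j ∈ s, ∑ k, F j k :=
        Finset.sum_le_sum fun j hj => Finset.sum_le_sum_of_subset_of_nonneg
          (Finset.subset_univ _) (fun k _ _ => hF0 j k)
    _ ≤ ∑ j, ∑ k, F j k :=
        Finset.sum_le_sum_of_subset_of_nonneg (Finset.subset_univ _)
          (fun j _ _ => Finset.sum_nonneg fun k _ => hF0 j k)

set_option maxHeartbeats 1000000 in
lemma bi_bounds (hα0 : 0 ≤ α) (hβ0 : 0 < β) (hn : 6 ≤ n)
    (hc2 : 2 ≤ ((n : ℝ) - 1) * (β * pn α n)) (i : Fin n) :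
    β ^ 3 / 2 * (n : ℝ)⁻¹ ≤ bi α w A i ∧ bi α w A i ≤ 64 / β ^ 3 * (n : ℝ)⁻¹ := by
  set x : ℝ := (n : ℝ) with hx
  have hx6 : (6 : ℝ) ≤ x := by rw [hx]; exact_mod_cast hn
  have hx0 : (0 : ℝ) < x := by linarith
  have hxne : x ≠ 0 := ne_of_gt hx0
  set p := pn α n with hp'
  have hp : 0 < p := by
    have hn0 : (0 : ℝ) < (n : ℝ) := by exact_mod_cast (show 0 < n by omega)
    exact Real.rpow_pos_of_pos hn0 _
  have hpne : p ≠ 0 := ne_of_gt hp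
  have hβne : β ≠ 0 := ne_of_gt hβ0
  set m := mui α w i with hm'
  have hmL : (x - 1) * (β * p) ≤ m := h.mui_lower hβ0.le i
  have hm2 : 2 ≤ m := hc2.trans hmL
  have hmU : m ≤ x * p := h.mui_upper hα0 i
  set E := Etri A i with hE'
  have hEU : E ≤ x ^ 2 * p ^ 3 := h.Etri_upper hα0 hβ0.le i
  have hcast1 : ((n - 1 : ℕ) : ℝ) = x - 1 := by
    have : 1 ≤ n := by omega
    push_cast [this]; ring
  have hcast2 : ((n - 2 : ℕ) : ℝ) = x - 2 := by
    have : 2 ≤ n := by omega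
    push_cast [this]; ring
  have hEL : (x - 1) * (x - 2) * (β * p) ^ 3 ≤ E := by
    have := h.Etri_lower hβ0.le i
    rwa [hcast1, hcast2] at this
  have h1 : 0 < x - 1 := by linarith
  have h2 : 0 < x - 2 := by linarith
  have hELpos : 0 < (x - 1) * (x - 2) * (β * p) ^ 3 :=
    mul_pos (mul_pos h1 h2) (pow_pos (mul_pos hβ0 hp) 3)
  have hE0 : 0 ≤ E := le_trans hELpos.le hEL
  have hm1 : 0 < m - 1 := by linarith
  have hm0 : 0 < m := by linarith
  have hmne : m ≠ 0 := ne_of_gt hm0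
  have hD : 0 < m ^ 2 * (m - 1) ^ 2 := mul_pos (pow_pos hm0 2) (pow_pos hm1 2)
  have hbi : bi α w A i = E * (2 * m - 1) / (m ^ 2 * (m - 1) ^ 2) := rfl
  constructor
  · -- lower bound
    have key1 : (x - 1) * (x - 2) * (β * p) ^ 3 * m ≤ E * (2 * m - 1) :=
      mul_le_mul hEL (by linarith) (by linarith) hE0
    have hDle : m ^ 2 * (m - 1) ^ 2 ≤ m ^ 4 := by
      have key2 : 0 ≤ m ^ 2 * (2 * m - 1) := mul_nonneg (sq_nonneg m) (by linarith)
      nlinarith [key2]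
    have step1 : (x - 1) * (x - 2) * (β * p) ^ 3 * m / m ^ 4
        ≤ E * (2 * m - 1) / (m ^ 2 * (m - 1) ^ 2) :=
      div_le_div₀ (mul_nonneg hE0 (by linarith)) key1 hD hDle
    have heq1 : (x - 1) * (x - 2) * (β * p) ^ 3 * m / m ^ 4
        = (x - 1) * (x - 2) * (β * p) ^ 3 / m ^ 3 := by
      field_simp
    have hm3 : m ^ 3 ≤ (x * p) ^ 3 := pow_le_pow_left₀ hm0.le hmU 3
    have step2 : (x - 1) * (x - 2) * (β * p) ^ 3 / (x * p) ^ 3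
        ≤ (x - 1) * (x - 2) * (β * p) ^ 3 / m ^ 3 :=
      div_le_div_of_nonneg_left hELpos.le (pow_pos hm0 3) hm3
    have step3 : β ^ 3 / 2 * x⁻¹ ≤ (x - 1) * (x - 2) * (β * p) ^ 3 / (x * p) ^ 3 := by
      have heq2 : (x - 1) * (x - 2) * (β * p) ^ 3 / (x * p) ^ 3
          = (x - 1) * (x - 2) * β ^ 3 / x ^ 3 := by
        field_simp
      rw [heq2]
      rw [show β ^ 3 / 2 * x⁻¹ = β ^ 3 * x ^ 2 / 2 / x ^ 3 from by field_simp]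
      refine (div_le_div_iff_of_pos_right (pow_pos hx0 3)).mpr ?_
      nlinarith [mul_nonneg (by linarith : (0:ℝ) ≤ x) (by linarith : (0:ℝ) ≤ x - 6),
        pow_pos hβ0 3]
    rw [hbi]
    exact step3.trans (step2.trans (heq1 ▸ step1))
  · -- upper bound
    have key1 : E * (2 * m - 1) ≤ x ^ 2 * p ^ 3 * (2 * m) :=
      mul_le_mul hEU (by linarith) (by linarith)
        (mul_nonneg (pow_nonneg hx0.le 2) (pow_nonneg hp.le 3))
    have hDge : m ^ 4 / 4 ≤ m ^ 2 * (m - 1) ^ 2 := by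
      have key2 : 0 ≤ m ^ 2 * ((3 * m - 2) * (m - 2)) :=
        mul_nonneg (sq_nonneg m) (mul_nonneg (by linarith) (by linarith))
      nlinarith [key2]
    have step1 : E * (2 * m - 1) / (m ^ 2 * (m - 1) ^ 2)
        ≤ x ^ 2 * p ^ 3 * (2 * m) / (m ^ 4 / 4) :=
      div_le_div₀ (mul_nonneg (mul_nonneg (pow_nonneg hx0.le 2) (pow_nonneg hp.le 3))
        (by linarith)) key1 (div_pos (pow_pos hm0 4) (by norm_num)) hDge
    have heq1 : x ^ 2 * p ^ 3 * (2 * m) / (m ^ 4 / 4) = 8 * x ^ 2 * p ^ 3 / m ^ 3 := by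
      field_simp
      ring
    have hlow : 0 < (x - 1) * (β * p) := lt_of_lt_of_le (by norm_num) hc2
    have hm3 : ((x - 1) * (β * p)) ^ 3 ≤ m ^ 3 := pow_le_pow_left₀ hlow.le hmL 3
    have step2 : 8 * x ^ 2 * p ^ 3 / m ^ 3 ≤ 8 * x ^ 2 * p ^ 3 / ((x - 1) * (β * p)) ^ 3 :=
      div_le_div_of_nonneg_left
        (by nlinarith [pow_nonneg hp.le 3, pow_nonneg hx0.le 2,
          mul_nonneg (pow_nonneg hx0.le 2) (pow_nonneg hp.le 3)])
        (pow_pos hlow 3) hm3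
    have step3 : 8 * x ^ 2 * p ^ 3 / ((x - 1) * (β * p)) ^ 3 ≤ 64 / β ^ 3 * x⁻¹ := by
      have h1ne : x - 1 ≠ 0 := ne_of_gt h1
      have heq2 : 8 * x ^ 2 * p ^ 3 / ((x - 1) * (β * p)) ^ 3
          = 8 * x ^ 2 / ((x - 1) ^ 3 * β ^ 3) := by
        field_simp
      rw [heq2, div_le_iff₀ (mul_pos (pow_pos h1 3) (pow_pos hβ0 3))]
      rw [show 64 / β ^ 3 * x⁻¹ * ((x - 1) ^ 3 * β ^ 3) = 64 * (x - 1) ^ 3 / x from by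
        field_simp]
      rw [le_div_iff₀ hx0]
      nlinarith [mul_pos (mul_pos h1 h1) h1, sq_nonneg (x - 2)]
    rw [hbi]
    exact ((step1.trans_eq heq1).trans step2).trans step3

omit h in
lemma sum_ite_ne_const (i : Fin n) (c : ℝ) :
    ∑ j : Fin n, (if i ≠ j then c else 0) = ((n : ℝ) - 1) * c := by
  have hpt : ∀ j : Fin n, (if i ≠ j then c else 0) = c - (if i = j then c else 0) := by
    intro j; by_cases hj : i = j <;> simp [hj]
  rw [Finset.sum_congr rfl (fun j _ => hpt j), Finset.sum_sub_distrib, Finset.sum_const,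
    Finset.sum_ite_eq, if_pos (Finset.mem_univ i), Finset.card_univ, Fintype.card_fin,
    nsmul_eq_mul]
  ring

set_option maxHeartbeats 1000000 in
lemma sum_theta (hα0 : 0 ≤ α) (hβ0 : 0 < β) (hn : 6 ≤ n)
    (hc2 : 2 ≤ ((n : ℝ) - 1) * (β * pn α n)) (hp2 : pn α n ≤ 1 / 2) :
    β ^ 7 / 8 * (pn α n / (n : ℝ) ^ 2) ≤
      ((n : ℝ) ^ 2)⁻¹ * ∑ i, ∑ j, (if i ≠ j then
        (bi α w A i ^ 2 + bi α w A i * bi α w A j) *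
          (muij α w i j * (1 - muij α w i j)) else 0) ∧
    ((n : ℝ) ^ 2)⁻¹ * ∑ i, ∑ j, (if i ≠ j then
        (bi α w A i ^ 2 + bi α w A i * bi α w A j) *
          (muij α w i j * (1 - muij α w i j)) else 0)
      ≤ 8192 / β ^ 6 * (pn α n / (n : ℝ) ^ 2) := by
  set x : ℝ := (n : ℝ) with hx
  have hx6 : (6 : ℝ) ≤ x := by rw [hx]; exact_mod_cast hn
  have hx0 : (0 : ℝ) < x := by linarith
  set p := pn α n with hp'
  have hp : 0 < p := by
    have hn0 : (0 : ℝ) < (n : ℝ) := by exact_mod_cast (show 0 < n by omega)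
    exact Real.rpow_pos_of_pos hn0 _
  set bL : ℝ := β ^ 3 / 2 * x⁻¹ with hbL
  set bU : ℝ := 64 / β ^ 3 * x⁻¹ with hbU
  have hb : ∀ i : Fin n, bL ≤ bi α w A i ∧ bi α w A i ≤ bU :=
    fun i => h.bi_bounds hα0 hβ0 hn hc2 i
  have hbL0 : 0 < bL := by
    rw [hbL]; exact mul_pos (by positivity) (inv_pos.mpr hx0)
  have hbU0 : 0 < bU := by
    rw [hbU]; exact mul_pos (by positivity) (inv_pos.mpr hx0)
  set KL : ℝ := bL ^ 2 * (β * p) with hKL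
  set KU : ℝ := 2 * bU ^ 2 * p with hKU
  have hKL0 : 0 ≤ KL := by
    rw [hKL]; exact mul_nonneg (sq_nonneg _) (mul_nonneg hβ0.le hp.le)
  have hKU0 : 0 ≤ KU := by
    rw [hKU]; exact mul_nonneg (mul_nonneg (by norm_num) (sq_nonneg _)) hp.le
  have hterm : ∀ i j : Fin n, i ≠ j →
      KL ≤ (bi α w A i ^ 2 + bi α w A i * bi α w A j) *
        (muij α w i j * (1 - muij α w i j)) ∧
      (bi α w A i ^ 2 + bi α w A i * bi α w A j) *
        (muij α w i j * (1 - muij α w i j)) ≤ KU := by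
    intro i j hij
    have hbi := hb i
    have hbj := hb j
    have hVl : β * p / 2 ≤ muij α w i j * (1 - muij α w i j) := by
      have g1 : β * p ≤ muij α w i j := h.muij_ge hβ0.le hij
      have g2 : (1 : ℝ) / 2 ≤ 1 - muij α w i j := by
        have := h.muij_le_pn hα0 i j
        rw [← hp'] at this
        linarith
      calc β * p / 2 = (β * p) * (1 / 2) := by ring
        _ ≤ muij α w i j * (1 - muij α w i j) :=
            mul_le_mul g1 g2 (by norm_num) ((mul_nonneg hβ0.le hp.le).trans g1)
    have hV0 : 0 ≤ muij α w i j * (1 - muij α w i j) :=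
      le_trans (by positivity) hVl
    have hVu : muij α w i j * (1 - muij α w i j) ≤ p := by
      have g1 : muij α w i j ≤ p := by rw [hp']; exact h.muij_le_pn hα0 i j
      have g0 : 0 ≤ muij α w i j := h.muij_nonneg hβ0.le i j
      calc muij α w i j * (1 - muij α w i j) ≤ muij α w i j * 1 :=
            mul_le_mul_of_nonneg_left (by linarith) g0
        _ ≤ p := by rwa [mul_one]
    have hsumL : 2 * bL ^ 2 ≤ bi α w A i ^ 2 + bi α w A i * bi α w A j := by
      have g1 : bL ^ 2 ≤ bi α w A i ^ 2 := pow_le_pow_left₀ hbL0.le hbi.1 2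
      have g2 : bL * bL ≤ bi α w A i * bi α w A j :=
        mul_le_mul hbi.1 hbj.1 hbL0.le (hbL0.le.trans hbi.1)
      nlinarith [g1, g2]
    have hsumU : bi α w A i ^ 2 + bi α w A i * bi α w A j ≤ 2 * bU ^ 2 := by
      have g1 : bi α w A i ^ 2 ≤ bU ^ 2 := pow_le_pow_left₀ (hbL0.le.trans hbi.1) hbi.2 2
      have g2 : bi α w A i * bi α w A j ≤ bU * bU :=
        mul_le_mul hbi.2 hbj.2 (hbL0.le.trans hbj.1) hbU0.le
      nlinarith [g1, g2]
    have hsum0 : 0 ≤ bi α w A i ^ 2 + bi α w A i * bi α w A j := by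
      have : 0 < 2 * bL ^ 2 := by positivity
      linarith [hsumL]
    constructor
    · calc KL = (2 * bL ^ 2) * (β * p / 2) := by rw [hKL]; ring
        _ ≤ _ := mul_le_mul hsumL hVl (by positivity) hsum0
    · calc (bi α w A i ^ 2 + bi α w A i * bi α w A j) *
            (muij α w i j * (1 - muij α w i j))
          ≤ (2 * bU ^ 2) * p := mul_le_mul hsumU hVu hV0 (by positivity)
        _ = KU := by rw [hKU]
  set S : ℝ := ∑ i, ∑ j, (if i ≠ j then
    (bi α w A i ^ 2 + bi α w A i * bi α w A j) *
      (muij α w i j * (1 - muij α w i j)) else 0) with hS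
  have hSL : x * ((x - 1) * KL) ≤ S := by
    rw [hS]
    calc x * ((x - 1) * KL) = ∑ _i : Fin n, ((x - 1) * KL) := by
          rw [Finset.sum_const, Finset.card_univ, Fintype.card_fin, nsmul_eq_mul, hx]
      _ = ∑ i : Fin n, ∑ j : Fin n, (if i ≠ j then KL else 0) :=
          Finset.sum_congr rfl fun i _ => (sum_ite_ne_const i KL).symm
      _ ≤ _ := by
          refine Finset.sum_le_sum fun i _ => Finset.sum_le_sum fun j _ => ?_
          by_cases hij : i ≠ j
          · rw [if_pos hij, if_pos hij]; exact (hterm i j hij).1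
          · rw [if_neg hij, if_neg hij]
  have hSU : S ≤ x * ((x - 1) * KU) := by
    rw [hS]
    calc (∑ i, ∑ j, (if i ≠ j then
        (bi α w A i ^ 2 + bi α w A i * bi α w A j) *
          (muij α w i j * (1 - muij α w i j)) else 0))
        ≤ ∑ i : Fin n, ∑ j : Fin n, (if i ≠ j then KU else 0) := by
          refine Finset.sum_le_sum fun i _ => Finset.sum_le_sum fun j _ => ?_
          by_cases hij : i ≠ j
          · rw [if_pos hij, if_pos hij]; exact (hterm i j hij).2
          · rw [if_neg hij, if_neg hij]
      _ = ∑ _i : Fin n, ((x - 1) * KU) :=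
          Finset.sum_congr rfl fun i _ => sum_ite_ne_const i KU
      _ = x * ((x - 1) * KU) := by
          rw [Finset.sum_const, Finset.card_univ, Fintype.card_fin, nsmul_eq_mul, hx]
  have hx2 : (0 : ℝ) < x ^ 2 := pow_pos hx0 2
  constructor
  · have main : β ^ 7 / 8 * (p / x ^ 2) ≤ (x ^ 2)⁻¹ * (x * ((x - 1) * KL)) := by
      have hrhs : (x ^ 2)⁻¹ * (x * ((x - 1) * KL)) = (x - 1) * β ^ 7 * p / (4 * x ^ 3) := by
        rw [hKL, hbL]
        field_simp
        ring
      have hlhs : β ^ 7 / 8 * (p / x ^ 2) = β ^ 7 * p / (8 * x ^ 2) := by ring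
      rw [hrhs, hlhs, div_le_div_iff₀ (by positivity) (by positivity)]
      have key : 0 ≤ (β ^ 7 * p) * (x ^ 2 * (x - 2)) := by
        apply mul_nonneg (mul_nonneg (pow_nonneg hβ0.le 7) hp.le)
        exact mul_nonneg (sq_nonneg x) (by linarith)
      nlinarith [key]
    exact main.trans (mul_le_mul_of_nonneg_left hSL (inv_nonneg.mpr hx2.le))
  · have step : (x ^ 2)⁻¹ * S ≤ (x ^ 2)⁻¹ * (x * ((x - 1) * KU)) :=
      mul_le_mul_of_nonneg_left hSU (inv_nonneg.mpr hx2.le)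
    refine step.trans ?_
    have h1 : x * ((x - 1) * KU) ≤ x * (x * KU) := by
      apply mul_le_mul_of_nonneg_left _ hx0.le
      exact mul_le_mul_of_nonneg_right (by linarith) hKU0
    have h2 : (x ^ 2)⁻¹ * (x * (x * KU)) = 8192 / β ^ 6 * (p / x ^ 2) := by
      rw [hKU, hbU]
      field_simp
      ring
    calc (x ^ 2)⁻¹ * (x * ((x - 1) * KU))
        ≤ (x ^ 2)⁻¹ * (x * (x * KU)) :=
          mul_le_mul_of_nonneg_left h1 (inv_nonneg.mpr hx2.le)
      _ = 8192 / β ^ 6 * (p / x ^ 2) := h2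

end IsHetRG

lemma pn_eq_inv (α : ℝ) (n : ℕ) : pn α n = (((n : ℝ)) ^ α)⁻¹ := by
  rw [pn, Real.rpow_neg (Nat.cast_nonneg n)]

lemma exists_N (hα : α ∈ Set.Ioo (0 : ℝ) 1) (hβ0 : 0 < β) :
    ∃ N : ℕ, ∀ n ≥ N, 6 ≤ n ∧ 2 ≤ ((n : ℝ) - 1) * (β * pn α n) ∧ pn α n ≤ 1 / 2 := by
  have htα : Tendsto (fun n : ℕ => ((n : ℝ)) ^ α) atTop atTop :=
    (tendsto_rpow_atTop hα.1).comp tendsto_natCast_atTop_atTop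
  have hpn0 : Tendsto (fun n : ℕ => pn α n) atTop (𝓝 0) := by
    have := htα.inv_tendsto_atTop
    refine this.congr (fun n => ?_)
    rw [Pi.inv_apply, ← pn_eq_inv]
  have E3 : ∀ᶠ n : ℕ in atTop, pn α n ≤ 1 / 2 :=
    hpn0.eventually (eventually_le_nhds (by norm_num))
  have h1α : Tendsto (fun n : ℕ => ((n : ℝ)) ^ (1 - α)) atTop atTop :=
    (tendsto_rpow_atTop (by linarith [hα.2])).comp tendsto_natCast_atTop_atTop
  have hconst : Tendsto (fun n : ℕ => β / 2 * ((n : ℝ)) ^ (1 - α)) atTop atTop :=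
    h1α.const_mul_atTop (by positivity)
  have hg : Tendsto (fun n : ℕ => ((n : ℝ) - 1) * (β * pn α n)) atTop atTop := by
    refine tendsto_atTop_mono' atTop ?_ hconst
    filter_upwards [eventually_ge_atTop 2] with n hn2
    have hx2 : (2 : ℝ) ≤ (n : ℝ) := by exact_mod_cast hn2
    have hx0 : (0 : ℝ) < (n : ℝ) := by linarith
    have hsplit : ((n : ℝ)) ^ (1 - α) = (n : ℝ) * pn α n := by
      rw [pn, show (1 : ℝ) - α = 1 + -α from by ring, Real.rpow_add hx0, Real.rpow_one]
    rw [hsplit]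
    have hp0 : 0 ≤ pn α n := pn_nonneg α n
    have key : 0 ≤ (β * pn α n) * ((n : ℝ) / 2 - 1) :=
      mul_nonneg (mul_nonneg hβ0.le hp0) (by linarith)
    nlinarith [key]
  have E2 : ∀ᶠ n : ℕ in atTop, 2 ≤ ((n : ℝ) - 1) * (β * pn α n) :=
    hg.eventually_ge_atTop 2
  have E1 : ∀ᶠ n : ℕ in atTop, 6 ≤ n := eventually_ge_atTop 6
  have := (E1.and (E2.and E3)).exists_forall_of_atTop
  obtain ⟨N, hN⟩ := this
  exact ⟨N, fun n hn => ⟨(hN n hn).1, (hN n hn).2.1, (hN n hn).2.2⟩⟩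

end Aux
/-- The second moment of `(1/n) ∑_i b_i (d_i - μ_i)` (with
`b_i = E[t_i](2μ_i-1)/(μ_i²(μ_i-1)²)`) equals the displayed double sum, and is
`Θ(p_n/n²)` uniformly over admissible weight arrays. -/
theorem linear_term_second_moment
    (α β : ℝ) (hα : α ∈ Set.Ioo (0 : ℝ) 1) (hβ : β ∈ Set.Ioo (0 : ℝ) 1) :
    (∀ (n : ℕ) (Ω : Type) [MeasureSpace Ω],
      ∀ (w : Fin n → Fin n → ℝ) (A : Fin n → Fin n → Ω → ℝ), IsHetRG α β n w A →
        (∫ ω, ((n : ℝ)⁻¹ * ∑ i, Etri A i * (2 * mui α w i - 1) /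
            (mui α w i ^ 2 * (mui α w i - 1) ^ 2) * (deg A i ω - mui α w i)) ^ 2)
          = ((n : ℝ) ^ 2)⁻¹ * (∑ i, ∑ j, if i ≠ j then
              (Etri A i * (2 * mui α w i - 1)) ^ 2 /
                (mui α w i ^ 4 * (mui α w i - 1) ^ 4) *
                (muij α w i j * (1 - muij α w i j)) else 0)
            + ((n : ℝ) ^ 2)⁻¹ * (∑ i, ∑ j, if i ≠ j then
              (Etri A i * (2 * mui α w i - 1) / (mui α w i ^ 2 * (mui α w i - 1) ^ 2)) *
                (Etri A j * (2 * mui α w j - 1) / (mui α w j ^ 2 * (mui α w j - 1) ^ 2)) *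
                (muij α w i j * (1 - muij α w i j)) else 0)) ∧
    (∃ c₁ c₂ : ℝ, 0 < c₁ ∧ 0 < c₂ ∧ ∃ N : ℕ, ∀ n ≥ N,
      ∀ (Ω : Type) [MeasureSpace Ω],
        ∀ (w : Fin n → Fin n → ℝ) (A : Fin n → Fin n → Ω → ℝ), IsHetRG α β n w A →
          c₁ * (pn α n / (n : ℝ) ^ 2) ≤
            (∫ ω, ((n : ℝ)⁻¹ * ∑ i, Etri A i * (2 * mui α w i - 1) /
              (mui α w i ^ 2 * (mui α w i - 1) ^ 2) * (deg A i ω - mui α w i)) ^ 2) ∧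
          (∫ ω, ((n : ℝ)⁻¹ * ∑ i, Etri A i * (2 * mui α w i - 1) /
              (mui α w i ^ 2 * (mui α w i - 1) ^ 2) * (deg A i ω - mui α w i)) ^ 2) ≤
            c₂ * (pn α n / (n : ℝ) ^ 2)) := by
  constructor
  · intro n Ω' inst w A hH
    have key := hH.second_moment_eq hα.1.le hβ.1.le
    simp only [bi] at key
    rw [key, ← mul_add]
    congr 1
    rw [← Finset.sum_add_distrib]
    refine Finset.sum_congr rfl fun i _ => ?_
    rw [← Finset.sum_add_distrib]
    refine Finset.sum_congr rfl fun j _ => ?_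
    by_cases hij : i ≠ j
    · rw [if_pos hij, if_pos hij, if_pos hij]
      have hBsq : (Etri A i * (2 * mui α w i - 1) /
            (mui α w i ^ 2 * (mui α w i - 1) ^ 2)) ^ 2
          = (Etri A i * (2 * mui α w i - 1)) ^ 2 /
            (mui α w i ^ 4 * (mui α w i - 1) ^ 4) := by
        rw [div_pow]
        congr 1
        ring
      rw [add_mul, hBsq]
    · rw [if_neg hij, if_neg hij, if_neg hij, add_zero]
  · obtain ⟨N, hN⟩ := exists_N (α := α) (β := β) hα hβ.1
    refine ⟨β ^ 7 / 8, 8192 / β ^ 6, div_pos (pow_pos hβ.1 7) (by norm_num),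
      div_pos (by norm_num) (pow_pos hβ.1 6), N, ?_⟩
    intro n hn Ω' inst w A hH
    obtain ⟨h6, h2c, hp2⟩ := hN n hn
    have key := hH.second_moment_eq hα.1.le hβ.1.le
    have hb := hH.sum_theta hα.1.le hβ.1 h6 h2c hp2
    simp only [bi] at key hb
    constructor
    · rw [key]
      exact hb.1
    · rw [key]
      exact hb.2

end HetRG
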